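/- In the same directed grid graph (horizontal edges weight 1; vertical edges in column j weight (α√n)^{2j}), for source s=(i,j) and target t=(k,j+1) with k < i and i-k ≤ √n: the unique shortest s–t path takes all i-k vertical edges in column j first, then one horizontal edge, with total weight 1 + (i-k)·(α√n)^{2j}. Moreover, for n sufficiently large, every other s–t path P' satisfies w(P') > α·(1 + (i-k)·(α√n)^{2j}). -/
import Mathlib


/-- The weight of a path (list of vertices): sum of weights of consecutive edges. -/
def pathWeight {V : Type} (w : V → V → ℝ) : List V → ℝ
  | [] => 0
  | [_] => 0
  | a :: b :: rest => w a b + pathWeight w (b :: rest)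

/-- A nonempty list of vertices is a path if consecutive vertices are joined by edges. -/
def IsPath {V : Type} (E : V → V → Prop) : List V → Prop
  | [] => False
  | [_] => True
  | a :: b :: rest => E a b ∧ IsPath E (b :: rest)

/-- `p` is a shortest path: it is a path, and no path with the same endpoints is shorter. -/
def IsShortestPath {V : Type} (E : V → V → Prop) (w : V → V → ℝ) (p : List V) : Prop :=
  IsPath E p ∧ ∀ q : List V, IsPath E q → q.head? = p.head? → q.getLast? = p.getLast? →
    pathWeight w p ≤ pathWeight w q

/-- Directed grid on vertices (row, column) with 0 ≤ row, col ≤ L; horizontal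
edges (i,j)→(i,j+1) and vertical edges (i,j)→(i-1,j) (rows decrease upward). -/
def gridE (L : ℕ) (u v : ℕ × ℕ) : Prop :=
  (v.1 = u.1 ∧ v.2 = u.2 + 1 ∧ u.1 ≤ L ∧ u.2 + 1 ≤ L) ∨
  (v.1 + 1 = u.1 ∧ v.2 = u.2 ∧ u.1 ≤ L ∧ u.2 ≤ L)

/-- Canonical "one row up" path: from (i,j), one vertical edge to (i-1,j),
then horizontal edges to (i-1,k). -/
def horPath (i j k : ℕ) : List (ℕ × ℕ) :=
  (i, j) :: (List.range (k - j + 1)).map (fun t => (i - 1, j + t))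

/-- Canonical "one column right" path: from (i,j), all vertical edges in
column j up to (k,j), then one horizontal edge to (k,j+1). -/
def vertPath (i j k : ℕ) : List (ℕ × ℕ) :=
  ((List.range (i - k + 1)).map (fun t => (i - t, j))) ++ [(k, j + 1)]


/-- Grid weights: horizontal edges weigh 1, vertical edges in column j weigh
(α√n)^(2j). -/
noncomputable def gridW (α : ℝ) (n : ℕ) (u v : ℕ × ℕ) : ℝ :=
  if u.1 = v.1 then 1 else (α * Real.sqrt n) ^ (2 * u.2)

lemma pathWeight_cons' {V : Type} (w : V → V → ℝ) {y : V} {l : List V}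
    (hh : l.head? = some y) (x : V) :
    pathWeight w (x :: l) = w x y + pathWeight w l := by
  cases l with
  | nil => simp at hh
  | cons a t =>
    simp only [List.head?_cons, Option.some.injEq] at hh
    subst hh; rfl

lemma isPath_cons' {V : Type} {E : V → V → Prop} {x y : V} {l : List V}
    (h1 : IsPath E l) (hh : l.head? = some y) (h2 : E x y) : IsPath E (x :: l) := by
  cases l with
  | nil => simp at hh
  | cons a t =>
    simp only [List.head?_cons, Option.some.injEq] at hh
    subst hh; exact ⟨h2, h1⟩

lemma vertPath_cons (r j k : ℕ) (h : k < r) :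
    vertPath r j k = (r, j) :: vertPath (r - 1) j k := by
  unfold vertPath
  have h1 : r - k + 1 = (r - 1 - k + 1) + 1 := by omega
  rw [h1, List.range_succ_eq_map]
  simp only [List.map_cons, Nat.sub_zero, List.map_map, List.cons_append]
  have hmap : List.map ((fun t => (r - t, j)) ∘ Nat.succ) (List.range (r - 1 - k + 1))
      = List.map (fun t => (r - 1 - t, j)) (List.range (r - 1 - k + 1)) := by
    apply List.map_congr_left
    intro t _
    simp only [Function.comp_apply, Prod.mk.injEq]
    exact ⟨by omega, trivial⟩
  rw [hmap]

lemma vertPath_base (j k : ℕ) : vertPath k j k = [(k, j), (k, j + 1)] := by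
  unfold vertPath
  norm_num [List.range_succ]

lemma vertPath_head (r j k : ℕ) : (vertPath r j k).head? = some (r, j) := by
  unfold vertPath
  rw [show r - k + 1 = (r - k) + 1 from rfl, List.range_succ_eq_map]
  simp

lemma vertPath_last (r j k : ℕ) : (vertPath r j k).getLast? = some (k, j + 1) := by
  unfold vertPath
  rw [List.getLast?_append]
  simp

lemma col_mono (L : ℕ) : ∀ q : List (ℕ × ℕ), IsPath (gridE L) q →
    ∀ u v : ℕ × ℕ, q.head? = some u → q.getLast? = some v → u.2 ≤ v.2 := by
  intro q
  induction q with
  | nil => intro h; exact absurd h (by simp [IsPath])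
  | cons x l ih =>
    intro h u v hu hv
    cases l with
    | nil =>
      simp only [List.head?_cons, Option.some.injEq] at hu
      simp only [List.getLast?_singleton, Option.some.injEq] at hv
      subst hu; subst hv; exact le_refl _
    | cons y t =>
      obtain ⟨he, hp⟩ := h
      simp only [List.head?_cons, Option.some.injEq] at hu
      subst hu
      rw [List.getLast?_cons_cons] at hv
      have h2 := ih hp y v rfl hv
      rcases he with ⟨_, hc, _⟩ | ⟨_, hc, _⟩ <;> omega

lemma lemB (L : ℕ) (α : ℝ) (n : ℕ) (k c : ℕ) :
    ∀ q : List (ℕ × ℕ), IsPath (gridE L) q → ∀ r, q.head? = some (r, c) →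
    q.getLast? = some (k, c) →
    k ≤ r ∧ pathWeight (gridW α n) q = ((r - k : ℕ) : ℝ) * (α * Real.sqrt n) ^ (2 * c) ∧
      (r = k → q = [(k, c)]) := by
  intro q
  induction q with
  | nil => intro h; exact absurd h (by simp [IsPath])
  | cons x l ih =>
    intro h r hh hl
    cases l with
    | nil =>
      simp only [List.head?_cons, Option.some.injEq] at hh
      simp only [List.getLast?_singleton, Option.some.injEq] at hl
      subst hh
      simp only [Prod.mk.injEq, and_true] at hl
      subst hl
      exact ⟨le_refl _, by simp [pathWeight, Nat.sub_self], fun _ => rfl⟩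
    | cons y t =>
      obtain ⟨he, hp⟩ := h
      simp only [List.head?_cons, Option.some.injEq] at hh
      subst hh
      rw [List.getLast?_cons_cons] at hl
      obtain ⟨b, c'⟩ := y
      rcases he with ⟨h1, h2, _⟩ | ⟨h1, h2, _⟩
      · -- horizontal edge: c' = c + 1, contradicts column monotonicity
        exfalso
        have := col_mono L ((b, c') :: t) hp (b, c') (k, c) rfl hl
        simp only at this h1 h2
        omega
      · -- vertical edge
        simp only at h1 h2
        subst c'
        have hb : b = r - 1 := by omega
        obtain ⟨hk, hw, hu⟩ := ih hp b rfl hl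
        have hrne : r ≠ b := by omega
        refine ⟨by omega, ?_, fun hrk => by omega⟩
        rw [pathWeight_cons' _ (by rfl), hw]
        have hgw : gridW α n (r, c) (b, c) = (α * Real.sqrt n) ^ (2 * c) := by
          simp [gridW, hrne]
        rw [hgw]
        have hcast : ((r - k : ℕ) : ℝ) = ((b - k : ℕ) : ℝ) + 1 := by
          have : r - k = (b - k) + 1 := by omega
          rw [this]; push_cast; ring
        rw [hcast]
        ring

lemma lemA (L : ℕ) (α : ℝ) (n : ℕ) (k j : ℕ) :
    ∀ q : List (ℕ × ℕ), IsPath (gridE L) q → ∀ r, q.head? = some (r, j) →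
    q.getLast? = some (k, j + 1) →
    ∃ b, k ≤ b ∧ b ≤ r ∧
      pathWeight (gridW α n) q =
        ((r - b : ℕ) : ℝ) * (α * Real.sqrt n) ^ (2 * j) + 1 +
          ((b - k : ℕ) : ℝ) * (α * Real.sqrt n) ^ (2 * (j + 1)) ∧
      (b = k → q = vertPath r j k) := by
  intro q
  induction q with
  | nil => intro h; exact absurd h (by simp [IsPath])
  | cons x l ih =>
    intro h r hh hl
    cases l with
    | nil =>
      simp only [List.head?_cons, Option.some.injEq] at hh
      simp only [List.getLast?_singleton, Option.some.injEq] at hl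
      exfalso
      subst hh
      simp only [Prod.mk.injEq] at hl
      omega
    | cons y t =>
      obtain ⟨he, hp⟩ := h
      simp only [List.head?_cons, Option.some.injEq] at hh
      subst hh
      rw [List.getLast?_cons_cons] at hl
      obtain ⟨b, c'⟩ := y
      rcases he with ⟨h1, h2, _⟩ | ⟨h1, h2, _⟩
      · -- horizontal edge to (r, j+1)
        simp only at h1 h2
        subst b; subst c'
        obtain ⟨hk, hw, hu⟩ := lemB L α n k (j + 1) ((r, j + 1) :: t) hp r rfl hl
        refine ⟨r, hk, le_refl _, ?_, fun hrk => ?_⟩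
        · rw [pathWeight_cons' _ (by rfl), hw]
          have hgw : gridW α n (r, j) (r, j + 1) = 1 := by simp [gridW]
          rw [hgw]
          simp only [Nat.sub_self, Nat.cast_zero, zero_mul]
          ring
        · subst hrk
          rw [hu rfl, vertPath_base]
      · -- vertical edge to (r-1, j)
        simp only at h1 h2
        subst c'
        have hb : b = r - 1 := by omega
        obtain ⟨b', hk', hb', hw, hu⟩ := ih hp b rfl hl
        have hrne : r ≠ b := by omega
        refine ⟨b', hk', by omega, ?_, fun hbk => ?_⟩
        · rw [pathWeight_cons' _ (by rfl), hw]
          have hgw : gridW α n (r, j) (b, j) = (α * Real.sqrt n) ^ (2 * j) := by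
            simp [gridW, hrne]
          rw [hgw]
          have hcast : ((r - b' : ℕ) : ℝ) = ((b - b' : ℕ) : ℝ) + 1 := by
            have : r - b' = (b - b') + 1 := by omega
            rw [this]; push_cast; ring
          rw [hcast]
          ring
        · rw [hu hbk, vertPath_cons r j k (by omega), hb]

lemma vertPath_spec (L : ℕ) (α : ℝ) (n : ℕ) (j : ℕ) (hj : j + 1 ≤ L) (k : ℕ) :
    ∀ m, k + m ≤ L →
      IsPath (gridE L) (vertPath (k + m) j k) ∧
      pathWeight (gridW α n) (vertPath (k + m) j k)
        = 1 + (m : ℝ) * (α * Real.sqrt n) ^ (2 * j) := by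
  intro m
  induction m with
  | zero =>
    intro hm
    rw [Nat.add_zero, vertPath_base]
    refine ⟨⟨Or.inl ⟨rfl, rfl, by omega, hj⟩, trivial⟩, ?_⟩
    simp [pathWeight, gridW]
  | succ m ihm =>
    intro hm
    obtain ⟨hP, hW⟩ := ihm (by omega)
    have hc : vertPath (k + (m + 1)) j k = (k + (m + 1), j) :: vertPath (k + m) j k := by
      rw [vertPath_cons _ _ _ (by omega), show k + (m + 1) - 1 = k + m from by omega]
    constructor
    · rw [hc]
      exact isPath_cons' hP (vertPath_head _ _ _)
        (Or.inr ⟨by omega, rfl, hm, by omega⟩)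
    · rw [hc, pathWeight_cons' _ (vertPath_head (k + m) j k), hW]
      have hne : k + (m + 1) ≠ k + m := by omega
      have hgw : gridW α n (k + (m + 1), j) (k + m, j) = (α * Real.sqrt n) ^ (2 * j) := by
        simp [gridW, hne]
      rw [hgw]
      push_cast
      ring

/-- for s = (i,j) and t = (k,j+1) with k < i, the canonical path
(all vertical edges in column j, then one horizontal edge) is the unique
shortest s–t path, of weight 1 + (i-k)(α√n)^{2j}, and every other s–t path is
more than α times longer (for n sufficiently large). -/
theorem stmt14 (α : ℝ) (hα : 1 ≤ α) (n L : ℕ) (hn : 4 ≤ n)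
    (hL : (L : ℝ) ≤ Real.sqrt n)
    (i j k : ℕ) (hki : k < i) (hiL : i ≤ L) (hjL : j + 1 ≤ L) :
    IsPath (gridE L) (vertPath i j k) ∧
    (vertPath i j k).head? = some ((i, j) : ℕ × ℕ) ∧
    (vertPath i j k).getLast? = some ((k, j + 1) : ℕ × ℕ) ∧
    pathWeight (gridW α n) (vertPath i j k)
      = 1 + ((i - k : ℕ) : ℝ) * (α * Real.sqrt n) ^ (2 * j) ∧
    ∀ q : List (ℕ × ℕ), IsPath (gridE L) q →
      q.head? = some ((i, j) : ℕ × ℕ) → q.getLast? = some ((k, j + 1) : ℕ × ℕ) →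
      q ≠ vertPath i j k →
      pathWeight (gridW α n) q
        > α * (1 + ((i - k : ℕ) : ℝ) * (α * Real.sqrt n) ^ (2 * j)) := by
  have hik : i = k + (i - k) := by omega
  obtain ⟨hP, hW⟩ := vertPath_spec L α n j hjL k (i - k) (by omega)
  rw [← hik] at hP hW
  refine ⟨hP, vertPath_head i j k, vertPath_last i j k, hW, ?_⟩
  intro q hq hqh hql hqne
  obtain ⟨b, hkb, hbi, hw, hu⟩ := lemA L α n k j q hq i hqh hql
  have hbk : b ≠ k := fun hbk => hqne (hu hbk)
  rw [hw]
  -- set up real arithmetic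
  set s := Real.sqrt n with hs
  have hs2 : (2 : ℝ) ≤ s := by
    rw [hs, show (2:ℝ) = Real.sqrt 4 by
      rw [show (4:ℝ) = 2 ^ 2 by norm_num, Real.sqrt_sq (by norm_num)]]
    exact Real.sqrt_le_sqrt (by exact_mod_cast hn)
  have hα0 : (0 : ℝ) ≤ α := by linarith
  have hS2 : (2 : ℝ) ≤ α * s := by nlinarith
  have hαs0 : (0 : ℝ) ≤ α * s := by linarith
  have hA1 : (1 : ℝ) ≤ (α * s) ^ (2 * j) := one_le_pow₀ (by linarith)
  set A := (α * s) ^ (2 * j) with hA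
  have hA0 : (0 : ℝ) ≤ A := by linarith
  have hA' : (α * s) ^ (2 * (j + 1)) = A * (α * s) ^ 2 := by
    rw [hA, show 2 * (j + 1) = 2 * j + 2 by ring, pow_add]
  have hm : ((i - k : ℕ) : ℝ) ≤ s := by
    have h1 : ((i - k : ℕ) : ℝ) ≤ (L : ℝ) := by exact_mod_cast Nat.le_trans (by omega) hiL
    linarith
  have hbk1 : (1 : ℝ) ≤ ((b - k : ℕ) : ℝ) := by
    have : 1 ≤ b - k := by omega
    exact_mod_cast this
  have hib0 : (0 : ℝ) ≤ ((i - b : ℕ) : ℝ) := Nat.cast_nonneg _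
  rw [hA']
  have key1 : α * ((i - k : ℕ) : ℝ) * A ≤ α * s * A :=
    mul_le_mul_of_nonneg_right (mul_le_mul_of_nonneg_left hm hα0) hA0
  have key2 : 2 * (α * s) * A ≤ (α * s) ^ 2 * A := by
    nlinarith [mul_le_mul_of_nonneg_right hS2 (mul_nonneg hαs0 hA0)]
  have key3 : A * (α * s) ^ 2 ≤ ((b - k : ℕ) : ℝ) * (A * (α * s) ^ 2) :=
    le_mul_of_one_le_left (by positivity) hbk1
  have key4 : 2 * α ≤ α * s * A := by
    nlinarith [mul_le_mul_of_nonneg_left hs2 hα0, le_mul_of_one_le_right hαs0 hA1]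
  have key5 : (0 : ℝ) ≤ ((i - b : ℕ) : ℝ) * A := mul_nonneg hib0 hA0
  nlinarith [key1, key2, key3, key4, key5]
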